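/- Let G be a graph, and let t₀, r, m be positive integers with r even, say r = 2r'. Let F = (P₁,P₂) be a flip such that G contains no complete bipartite subgraph K_{t₀,t₀} with one side contained in P₁ and the other side in P₂. Suppose B ⊆ V(G) is a set of at least t₀²+t₀+m−2 vertices such that all pairs of distinct vertices of B are at distance at most r in G, but B is r-independent in G ⊕ F (all pairwise distances exceed r). Then min(|P₁|,|P₂|) ≤ t₀²+t₀−2. -/

import Mathlib

/-- The flip of a graph `G` on a pair of vertex sets `(A, B)`: the adjacency between
every pair of distinct vertices `u ∈ A`, `v ∈ B` is complemented. -/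
def gflip {V : Type*} (G : SimpleGraph V) (A B : Set V) : SimpleGraph V where
  Adj u v := u ≠ v ∧ Xor' (G.Adj u v) ((u ∈ A ∧ v ∈ B) ∨ (u ∈ B ∧ v ∈ A))
  symm := by
    constructor
    intro u v hx
    obtain ⟨h, hx⟩ := hx
    refine ⟨h.symm, ?_⟩
    have hGA : G.Adj v u ↔ G.Adj u v := ⟨fun h => h.symm, fun h => h.symm⟩
    unfold Xor' Xor at *
    tauto
  loopless := by constructor; intro v hx; exact hx.1 rfl

/-- `B` is `r`-independent in `H`: any two distinct vertices of `B` are at distance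
strictly greater than `r` (every walk between them is longer than `r`). -/
def RIndep {V : Type*} (H : SimpleGraph V) (r : ℕ) (B : Set V) : Prop :=
  ∀ u ∈ B, ∀ v ∈ B, u ≠ v → ∀ p : H.Walk u v, r < p.length

/-!
Suppose both sides of the flip are large and write `H` for the flipped graph. A `G`-walk of
length at most `2r'` between two vertices of `B` cannot survive in `H`, so it uses a flipped edge,
whose ends lie in `P₁ ∪ P₂`; one of these ends is at `H`-distance less than `r'` from an end of the
walk. Hence all but one vertex of `B` are `H`-near `P₁` or `P₂`, and at least `2t₀` of them are near
the same side, say `P₁`. Moving each of them to a nearby point of `P₁` gives `2t₀` points of `P₁`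
without common `H`-neighbours. As every `G`-non-edge between `P₁` and `P₂` is an `H`-edge, each
other vertex of `P₂` is `G`-adjacent to all but at most one of these points, and a `K_{t₀,t₀}`
between `P₁` and `P₂` follows by splitting the points into two halves.
-/

theorem Finset.card_le_card_filter_add_one {α : Type*} {s : Finset α} {p : α → Prop}
    [DecidablePred p] (h : ∀ u ∈ s, ∀ v ∈ s, u ≠ v → p u ∨ p v) :
    s.card ≤ (s.filter p).card + 1 := by
  have hfar : (s.filter fun a ↦ ¬p a).card ≤ 1 :=
    Finset.card_le_one.2 fun u hu v hv ↦ by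
      simp only [Finset.mem_filter] at hu hv
      by_contra huv
      exact (h u hu.1 v hv.1 huv).elim hu.2 hv.2
  have := Finset.card_filter_add_card_filter_not (s := s) p
  omega

section Flip

variable {V : Type*} {G : SimpleGraph V} {A B : Set V} {x y : V}

theorem gflip_adj_of_not_adj (hxy : (x ∈ A ∧ y ∈ B) ∨ (x ∈ B ∧ y ∈ A)) (hne : x ≠ y)
    (hG : ¬G.Adj x y) : (gflip G A B).Adj x y :=
  ⟨hne, Or.inr ⟨hxy, hG⟩⟩

theorem mem_union_of_adj_of_not_gflip_adj (hG : G.Adj x y) (hH : ¬(gflip G A B).Adj x y) :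
    x ∈ A ∪ B ∧ y ∈ A ∪ B := by
  by_contra hxy
  refine hH ⟨hG.ne, Or.inl ⟨hG, ?_⟩⟩
  rintro (⟨hx, hy⟩ | ⟨hx, hy⟩) <;> simp_all

end Flip

theorem RIndep.mono {V : Type*} {H : SimpleGraph V} {r : ℕ} {B C : Set V} (hB : RIndep H r B)
    (hCB : C ⊆ B) : RIndep H r C :=
  fun u hu v hv => hB u (hCB hu) v (hCB hv)

namespace SimpleGraph

variable {V : Type*}

theorem Walk.exists_walk_eq_length_or_exists_first_missing_edge {G H : SimpleGraph V} {u v : V}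
    (p : G.Walk u v) :
    (∃ q : H.Walk u v, q.length = p.length) ∨
      ∃ x y, G.Adj x y ∧ ¬H.Adj x y ∧
        ∃ (q : H.Walk u x) (w : G.Walk y v), q.length + 1 + w.length = p.length := by
  induction p with
  | nil => exact .inl ⟨.nil, rfl⟩
  | @cons a b c hab p ih =>
    by_cases hH : H.Adj a b
    · rcases ih with ⟨q, hq⟩ | ⟨x, y, hG, hxy, q, w, hlen⟩
      · exact .inl ⟨.cons hH q, by simp [hq]⟩
      · exact .inr ⟨x, y, hG, hxy, .cons hH q, w, by simp only [Walk.length_cons]; omega⟩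
    · exact .inr ⟨a, b, hab, hH, .nil, p, by simp only [Walk.length_nil, Walk.length_cons]; omega⟩

def IsNear (H : SimpleGraph V) (d : ℕ) (P : Set V) (b : V) : Prop :=
  ∃ z ∈ P, ∃ q : H.Walk b z, q.length < d

theorem isNear_union {H : SimpleGraph V} {d : ℕ} {P Q : Set V} {b : V} :
    IsNear H d (P ∪ Q) b ↔ IsNear H d P b ∨ IsNear H d Q b := by
  simp only [IsNear, Set.mem_union, or_and_right, exists_or]

section Near

variable {G H : SimpleGraph V} {S : Set V} {d : ℕ}

theorem isNear_of_walk (hS : ∀ x y, G.Adj x y → ¬H.Adj x y → x ∈ S ∧ y ∈ S) {v y : V}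
    (hy : y ∈ S) (w : G.Walk v y) (hw : w.length < d) : IsNear H d S v := by
  rcases w.exists_walk_eq_length_or_exists_first_missing_edge (H := H) with
    ⟨q, hq⟩ | ⟨x, _, hG, hH, q, _, hlen⟩
  · exact ⟨y, hy, q, hq ▸ hw⟩
  · exact ⟨x, (hS _ _ hG hH).1, q, by omega⟩

/-- The walk leaves `H` along an edge with both ends in `S`; the part before or the part after
that edge is shorter than `d`. -/
theorem isNear_or_isNear_of_walk (hS : ∀ x y, G.Adj x y → ¬H.Adj x y → x ∈ S ∧ y ∈ S)
    {u v : V} (p : G.Walk u v) (hp : p.length ≤ 2 * d)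
    (hfar : ∀ q : H.Walk u v, p.length < q.length) : IsNear H d S u ∨ IsNear H d S v := by
  rcases p.exists_walk_eq_length_or_exists_first_missing_edge (H := H) with
    ⟨q, hq⟩ | ⟨x, y, hG, hH, q, w, hlen⟩
  · exact absurd (hfar q) (by omega)
  obtain ⟨hx, hy⟩ := hS _ _ hG hH
  by_cases hq : q.length < d
  · exact .inl ⟨x, hx, q, hq⟩
  · exact .inr (isNear_of_walk hS hy w.reverse (by rw [Walk.length_reverse]; omega))

end Near

def HasBiclique (G : SimpleGraph V) (t : ℕ) (P Q : Finset V) : Prop :=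
  ∃ X Y : Finset V, X ⊆ P ∧ Y ⊆ Q ∧ Disjoint X Y ∧
    X.card = t ∧ Y.card = t ∧ ∀ x ∈ X, ∀ y ∈ Y, G.Adj x y

variable {G H : SimpleGraph V} {t : ℕ} {P Q X Y : Finset V}

theorem HasBiclique.symm (h : G.HasBiclique t P Q) : G.HasBiclique t Q P :=
  let ⟨X, Y, hX, hY, hXY, hXc, hYc, hadj⟩ := h
  ⟨Y, X, hY, hX, hXY.symm, hYc, hXc, fun y hy x hx ↦ (hadj x hx y hy).symm⟩

theorem HasBiclique.mono {P' Q' : Finset V} (h : G.HasBiclique t P Q) (hP : P ⊆ P')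
    (hQ : Q ⊆ Q') : G.HasBiclique t P' Q' :=
  let ⟨X, Y, hX, hY, hXY, hXc, hYc, hadj⟩ := h
  ⟨X, Y, hX.trans hP, hY.trans hQ, hXY, hXc, hYc, hadj⟩

theorem hasBiclique_of_le_card (hXY : Disjoint X Y) (hX : t ≤ X.card) (hY : t ≤ Y.card)
    (hadj : ∀ x ∈ X, ∀ y ∈ Y, G.Adj x y) : G.HasBiclique t X Y := by
  obtain ⟨X', hX', hX'c⟩ := Finset.exists_subset_card_eq hX
  obtain ⟨Y', hY', hY'c⟩ := Finset.exists_subset_card_eq hY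
  exact ⟨X', Y', hX', hY', hXY.mono hX' hY', hX'c, hY'c,
    fun x hx y hy ↦ hadj x (hX' hx) y (hY' hy)⟩

/-- Split `X` into halves: every `y ∈ Y` is complete to one of them, so one half is complete to
at least half of `Y`. -/
theorem hasBiclique_of_adj_or_adj (hXY : Disjoint X Y) (hX : 2 * t ≤ X.card)
    (hY : 2 * t ≤ Y.card) (hadj : ∀ x ∈ X, ∀ x' ∈ X, x ≠ x' → ∀ y ∈ Y, G.Adj x y ∨ G.Adj x' y) :
    G.HasBiclique t X Y := by
  classical
  obtain ⟨X₁, hX₁, hX₁c⟩ := Finset.exists_subset_card_eq (show t ≤ X.card by omega)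
  set X₂ := X \ X₁
  have hX₂c : t ≤ X₂.card := by rw [Finset.card_sdiff_of_subset hX₁]; omega
  set Y₁ := Y.filter fun y ↦ ∀ x ∈ X₁, G.Adj x y
  set Y₂ := Y.filter fun y ↦ ∀ x ∈ X₂, G.Adj x y
  have hcover : Y ⊆ Y₁ ∪ Y₂ := by
    intro y hy
    by_contra hy'
    simp only [Y₁, Y₂, Finset.mem_union, Finset.mem_filter, not_or, not_and, not_forall] at hy'
    obtain ⟨x₁, hx₁, hx₁y⟩ := hy'.1 hy
    obtain ⟨x₂, hx₂, hx₂y⟩ := hy'.2 hy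
    have hne : x₁ ≠ x₂ := by rintro rfl; exact (Finset.mem_sdiff.1 hx₂).2 hx₁
    exact (hadj x₁ (hX₁ hx₁) x₂ (Finset.sdiff_subset hx₂) hne y hy).elim hx₁y hx₂y
  have hYc : t ≤ Y₁.card ∨ t ≤ Y₂.card := by
    have := (Finset.card_le_card hcover).trans (Finset.card_union_le Y₁ Y₂)
    omega
  rcases hYc with hY₁c | hY₂c
  · refine (hasBiclique_of_le_card (hXY.mono hX₁ (Finset.filter_subset _ _)) hX₁c.ge hY₁c
      fun x hx y hy ↦ (Finset.mem_filter.1 hy).2 x hx).mono hX₁ (Finset.filter_subset _ _)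
  · refine (hasBiclique_of_le_card (hXY.mono Finset.sdiff_subset (Finset.filter_subset _ _))
      hX₂c hY₂c fun x hx y hy ↦ (Finset.mem_filter.1 hy).2 x hx).mono Finset.sdiff_subset
      (Finset.filter_subset _ _)

/-- Two points of `S` have no common `H`-neighbour, so they cannot both be non-adjacent in `G` to
some `y ∈ Q` outside `S`. -/
theorem hasBiclique_of_rIndep_two {S : Finset V}
    (hH : ∀ x ∈ P, ∀ y ∈ Q, x ≠ y → ¬G.Adj x y → H.Adj x y) (hSP : S ⊆ P)
    (hind : RIndep H 2 ↑S) (hS : 2 * t ≤ S.card) (hQ : 4 * t ≤ Q.card) :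
    G.HasBiclique t P Q := by
  classical
  obtain ⟨S', hS', hS'c⟩ := Finset.exists_subset_card_eq hS
  have hT : 2 * t ≤ (Q \ S').card := by
    have := Finset.le_card_sdiff S' Q
    omega
  refine (hasBiclique_of_adj_or_adj Finset.disjoint_sdiff hS'c.ge hT ?_).mono
    (hS'.trans hSP) Finset.sdiff_subset
  intro x hx x' hx' hne y hy
  obtain ⟨hyQ, hyS'⟩ := Finset.mem_sdiff.1 hy
  by_contra! hG
  have hxy : H.Adj x y := hH x (hSP (hS' hx)) y hyQ (by rintro rfl; exact hyS' hx) hG.1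
  have hyx' : H.Adj y x' :=
    (hH x' (hSP (hS' hx')) y hyQ (by rintro rfl; exact hyS' hx') hG.2).symm
  have := hind x (hS' hx) x' (hS' hx') hne (.cons hxy (.cons hyx' .nil))
  simp at this

/-- Send each `b ∈ C` to a point of `P` at distance less than `d`: two images at distance at most
`2` would give a walk of length at most `2d` between distinct vertices of `C`. -/
theorem exists_subset_rIndep_two_of_isNear {C : Finset V} {d : ℕ}
    (hind : RIndep H (2 * d) ↑C) (hnear : ∀ b ∈ C, IsNear H d ↑P b) :
    ∃ S : Finset V, S ⊆ P ∧ S.card = C.card ∧ RIndep H 2 ↑S := by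
  classical
  have : ∀ b, ∃ z, b ∈ C → z ∈ P ∧ ∃ q : H.Walk b z, q.length < d := fun b ↦
    if hb : b ∈ C then
      let ⟨z, hz, q, hq⟩ := hnear b hb
      ⟨z, fun _ ↦ ⟨hz, q, hq⟩⟩
    else ⟨b, fun h ↦ absurd h hb⟩
  choose f hf using this
  have heq : ∀ b ∈ C, ∀ c ∈ C, ∀ q : H.Walk (f b) (f c), q.length ≤ 2 → b = c := by
    intro b hb c hc q hq
    by_contra hbc
    obtain ⟨-, qb, hqb⟩ := hf b hb
    obtain ⟨-, qc, hqc⟩ := hf c hc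
    have := hind b hb c hc hbc (qb.append (q.append qc.reverse))
    simp only [Walk.length_append, Walk.length_reverse] at this
    omega
  refine ⟨C.image f, fun z hz ↦ ?_, Finset.card_image_of_injOn fun b hb c hc hbc ↦
    heq b hb c hc (Walk.nil.copy rfl hbc) (by simp), ?_⟩
  · obtain ⟨b, hb, rfl⟩ := Finset.mem_image.1 hz
    exact (hf b hb).1
  · intro x hx x' hx' hne q
    obtain ⟨b, hb, rfl⟩ := Finset.mem_image.1 hx
    obtain ⟨c, hc, rfl⟩ := Finset.mem_image.1 hx'
    by_contra! hq
    exact hne (congrArg f (heq b hb c hc q hq))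

theorem hasBiclique_of_isNear {C : Finset V} {d : ℕ}
    (hH : ∀ x ∈ P, ∀ y ∈ Q, x ≠ y → ¬G.Adj x y → H.Adj x y) (hind : RIndep H (2 * d) ↑C)
    (hnear : ∀ b ∈ C, IsNear H d ↑P b) (hC : 2 * t ≤ C.card) (hQ : 4 * t ≤ Q.card) :
    G.HasBiclique t P Q := by
  obtain ⟨S, hSP, hSc, hSind⟩ := exists_subset_rIndep_two_of_isNear hind hnear
  exact hasBiclique_of_rIndep_two hH hSP hSind (hSc ▸ hC) hQ

end SimpleGraph

open SimpleGraph

theorem small_side_of_flip_even_general {V : Type*} (G : SimpleGraph V) (t₀ r' m : ℕ)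
    (hbig : 8 * t₀ ≤ t₀ ^ 2 + t₀ - 2)
    (P₁ P₂ B : Finset V)
    (hKtt : ¬ ∃ X Y : Finset V, X ⊆ P₁ ∧ Y ⊆ P₂ ∧ Disjoint X Y ∧
      X.card = t₀ ∧ Y.card = t₀ ∧ ∀ x ∈ X, ∀ y ∈ Y, G.Adj x y)
    (hB : t₀ ^ 2 + t₀ + m - 2 ≤ B.card)
    (hclose : ∀ u ∈ B, ∀ v ∈ B, u ≠ v → ∃ p : G.Walk u v, p.length ≤ 2 * r')
    (hind : RIndep (gflip G ↑P₁ ↑P₂) (2 * r') ↑B) :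
    min P₁.card P₂.card ≤ t₀ ^ 2 + t₀ - 2 := by
  classical
  by_contra! hsmall
  rw [lt_min_iff] at hsmall
  set H := gflip G ↑P₁ ↑P₂
  have hpair : ∀ u ∈ B, ∀ v ∈ B, u ≠ v →
      IsNear H r' (↑P₁ ∪ ↑P₂) u ∨ IsNear H r' (↑P₁ ∪ ↑P₂) v := fun u hu v hv huv ↦
    let ⟨p, hp⟩ := hclose u hu v hv huv
    isNear_or_isNear_of_walk (fun _ _ ↦ mem_union_of_adj_of_not_gflip_adj) p hp
      fun q ↦ hp.trans_lt (hind u hu v hv huv q)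
  have hcount : B.card ≤
      (B.filter (IsNear H r' ↑P₁)).card + (B.filter (IsNear H r' ↑P₂)).card + 1 :=
    calc B.card ≤ (B.filter (IsNear H r' (↑P₁ ∪ ↑P₂))).card + 1 :=
          Finset.card_le_card_filter_add_one hpair
      _ ≤ _ := by
          simp only [isNear_union, Finset.filter_or]
          grw [Finset.card_union_le]
  have hindC (P : Finset V) : RIndep H (2 * r') ↑(B.filter (IsNear H r' ↑P)) :=
    hind.mono (Finset.coe_subset.2 (Finset.filter_subset _ _))
  have hnearC (P : Finset V) : ∀ b ∈ B.filter (IsNear H r' ↑P), IsNear H r' ↑P b :=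
    fun _ hb ↦ (Finset.mem_filter.1 hb).2
  generalize t₀ ^ 2 = s at *
  rcases (by omega : 2 * t₀ ≤ (B.filter (IsNear H r' ↑P₁)).card ∨
      2 * t₀ ≤ (B.filter (IsNear H r' ↑P₂)).card) with h | h
  · exact hKtt (hasBiclique_of_isNear (fun x hx y hy ↦ gflip_adj_of_not_adj (.inl ⟨hx, hy⟩))
      (hindC P₁) (hnearC P₁) h (by omega))
  · exact hKtt (hasBiclique_of_isNear (fun x hx y hy ↦ gflip_adj_of_not_adj (.inr ⟨hx, hy⟩))
      (hindC P₂) (hnearC P₂) h (by omega)).symm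

/-- If a single biclique-free flip `(P₁, P₂)` makes a set of at least `t₀² + t₀ + m - 2`
pairwise `r`-close vertices `r`-independent (`r = 2r'` even), then one of the two sides
of the flip has at most `t₀² + t₀ - 2` vertices. -/
theorem small_side_of_flip_even {V : Type*} (G : SimpleGraph V) (t₀ r' m : ℕ)
    (ht₀ : 0 < t₀) (hr' : 0 < r') (hm : 0 < m)
    (hbig : 8 * t₀ ≤ t₀ ^ 2 + t₀ - 2)
    (P₁ P₂ B : Finset V)
    (hKtt : ¬ ∃ X Y : Finset V, X ⊆ P₁ ∧ Y ⊆ P₂ ∧ Disjoint X Y ∧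
      X.card = t₀ ∧ Y.card = t₀ ∧ ∀ x ∈ X, ∀ y ∈ Y, G.Adj x y)
    (hB : t₀ ^ 2 + t₀ + m - 2 ≤ B.card)
    (hclose : ∀ u ∈ B, ∀ v ∈ B, u ≠ v → ∃ p : G.Walk u v, p.length ≤ 2 * r')
    (hind : RIndep (gflip G ↑P₁ ↑P₂) (2 * r') ↑B) :
    min P₁.card P₂.card ≤ t₀ ^ 2 + t₀ - 2 :=
  small_side_of_flip_even_general G t₀ r' m hbig P₁ P₂ B hKtt hB hclose hind
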